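/- arXiv:math/0311151 — 3 statements merged into one kernel-verified Lean document; each statement's English description precedes it below -/
import Mathlib

section
/- The two-variable delta function identity holds: x₂⁻¹ δ((x₁-x₀)/x₂) = x₁⁻¹ δ((x₂+x₀)/x₁), with binomials expanded by the binomial expansion convention (nonnegative powers of the second variable). -/
/-- The generalized binomial coefficient `(m choose k)` for `m : ℤ`, `k : ℕ`:
for `m ≥ 0` it is the usual binomial coefficient, and for `m < 0` it is
`(-1)^k * ((k - m - 1) choose k)`, implementing the binomial expansion
convention `(x+y)^m = ∑_{k≥0} (m choose k) x^{m-k} y^k`. -/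
def zchoose (m : ℤ) (k : ℕ) : ℤ :=
  if 0 ≤ m then ((m.toNat).choose k : ℤ) else (-1) ^ k * ((((k : ℤ) - m - 1).toNat).choose k : ℤ)

/-- Coefficient of `x₀^a x₁^b x₂^c` in `x₂⁻¹ δ((x₁-x₀)/x₂)
= ∑_{n∈ℤ} (x₁-x₀)^n x₂^{-n-1}`, each `(x₁-x₀)^n` expanded in nonnegative
powers of `x₀`. -/
def deltaCoeffL (a b c : ℤ) : ℤ :=
  if 0 ≤ a ∧ b = -c - 1 - a then zchoose (-c - 1) a.toNat * (-1) ^ a.toNat else 0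

/-- Coefficient of `x₀^a x₁^b x₂^c` in `x₁⁻¹ δ((x₂+x₀)/x₁)
= ∑_{n∈ℤ} (x₂+x₀)^n x₁^{-n-1}`, each `(x₂+x₀)^n` expanded in nonnegative
powers of `x₀`. -/
def deltaCoeffR (a b c : ℤ) : ℤ :=
  if 0 ≤ a ∧ c = -b - 1 - a then zchoose (-b - 1) a.toNat else 0

lemma zchoose_flip (m : ℤ) (k : ℕ) :
    zchoose m k * (-1) ^ k = zchoose ((k : ℤ) - m - 1) k := by
  unfold zchoose
  by_cases hm : 0 ≤ m
  · by_cases h : 0 ≤ (k : ℤ) - m - 1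
    · rw [if_pos hm, if_pos h]
      have h1 : (m.toNat).choose k = 0 := by
        apply Nat.choose_eq_zero_of_lt
        omega
      have h2 : (((k : ℤ) - m - 1).toNat).choose k = 0 := by
        apply Nat.choose_eq_zero_of_lt
        omega
      rw [h1, h2]; simp
    · rw [if_pos hm, if_neg h]
      have : ((k : ℤ) - ((k : ℤ) - m - 1) - 1).toNat = m.toNat := by omega
      rw [this]
      ring
  · have h : 0 ≤ (k : ℤ) - m - 1 := by omega
    rw [if_neg hm, if_pos h]
    rw [mul_comm ((-1:ℤ)^k), mul_assoc, ← mul_pow]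
    simp

/-- The two-variable delta function identity
`x₂⁻¹ δ((x₁-x₀)/x₂) = x₁⁻¹ δ((x₂+x₀)/x₁)`, with binomials expanded by the
binomial expansion convention, as an equality of formal series in
`x₀, x₁, x₂`. -/
theorem two_term_delta_identity (a b c : ℤ) :
    deltaCoeffL a b c = deltaCoeffR a b c := by
  unfold deltaCoeffL deltaCoeffR
  by_cases h : 0 ≤ a ∧ b = -c - 1 - a
  · rw [if_pos h, if_pos ⟨h.1, by omega⟩]
    rw [zchoose_flip]
    congr 1
    omega
  · rw [if_neg h, if_neg (by omega)]
end

section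
/- The map Ψ defined on pairs of operators by Ψ(t^m f(D), t^n g(D)) = δ_{m+n,0} ∑_{i=1}^m f(-i) g(m-i) for m > 0, with Ψ antisymmetric and Ψ = 0 when m+n ≠ 0 or m = 0, is a 2-cocycle on the Lie algebra of formal differential operators: it satisfies Ψ([a,b],c) + Ψ([b,c],a) + Ψ([c,a],b) = 0 for all a, b, c in the span of the t^m f(D). -/
open Polynomial

/-- Signed sum of `φ` over the integer interval `[a, b)`. -/
noncomputable def intS (a b : ℤ) (φ : ℤ → ℂ) : ℂ :=
  (∑ j ∈ Finset.Ico a b, φ j) - ∑ j ∈ Finset.Ico b a, φ j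

lemma intS_symm (a b : ℤ) (φ : ℤ → ℂ) : intS a b φ = - intS b a φ := by
  simp [intS]

lemma intS_self (a : ℤ) (φ : ℤ → ℂ) : intS a a φ = 0 := by simp [intS]

lemma sum_Ico_cat (φ : ℤ → ℂ) {a b c : ℤ} (hab : a ≤ b) (hbc : b ≤ c) :
    (∑ j ∈ Finset.Ico a b, φ j) + ∑ j ∈ Finset.Ico b c, φ j
      = ∑ j ∈ Finset.Ico a c, φ j := by
  rw [← Finset.Ico_union_Ico_eq_Ico hab hbc,
    Finset.sum_union (Finset.Ico_disjoint_Ico_consecutive a b c)]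

lemma intS_of_le {a b : ℤ} (hab : a ≤ b) (φ : ℤ → ℂ) :
    intS a b φ = ∑ j ∈ Finset.Ico a b, φ j := by
  rw [intS, Finset.Ico_eq_empty (by omega : ¬ b < a)]; simp

lemma intS_add_intS (a b c : ℤ) (φ : ℤ → ℂ) :
    intS a b φ + intS b c φ = intS a c φ := by
  rcases le_total a b with hab | hab <;> rcases le_total b c with hbc | hbc <;>
    rcases le_total a c with hac | hac
  · rw [intS_of_le hab, intS_of_le hbc, intS_of_le hac]
    linear_combination sum_Ico_cat φ hab hbc
  · have h1 : a = c := le_antisymm (hab.trans hbc) hac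
    subst h1
    rw [intS_self, intS_symm]; ring
  · rw [intS_of_le hab, intS_symm b c, intS_of_le hbc, intS_of_le hac]
    linear_combination -sum_Ico_cat φ hac hbc
  · rw [intS_of_le hab, intS_symm b c, intS_of_le hbc, intS_symm a c, intS_of_le hac]
    linear_combination sum_Ico_cat φ hac hab
  · rw [intS_symm a b, intS_of_le hab, intS_of_le hbc, intS_of_le hac]
    linear_combination -sum_Ico_cat φ hab hac
  · rw [intS_symm a b, intS_of_le hab, intS_of_le hbc, intS_symm a c, intS_of_le hac]
    linear_combination sum_Ico_cat φ hbc hac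
  · have h1 : a = b := le_antisymm (hac.trans hbc) hab
    have h2 : b = c := le_antisymm (h1 ▸ hac) hbc
    subst h1; subst h2
    simp [intS_self]
  · rw [intS_symm a b, intS_of_le hab, intS_symm b c, intS_of_le hbc,
      intS_symm a c, intS_of_le hac]
    linear_combination -sum_Ico_cat φ hbc hab

lemma intS_shift (a b t : ℤ) (φ : ℤ → ℂ) :
    intS (a + t) (b + t) φ = intS a b (fun j => φ (j + t)) := by
  have key : ∀ u v : ℤ, ∑ j ∈ Finset.Ico (u + t) (v + t), φ j
      = ∑ j ∈ Finset.Ico u v, φ (j + t) := by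
    intro u v
    rw [← Finset.map_add_right_Ico u v t, Finset.sum_map]
    rfl
  rw [intS, intS, key, key]

lemma intS_sub (a b : ℤ) (φ ψ : ℤ → ℂ) :
    intS a b (fun j => φ j - ψ j) = intS a b φ - intS a b ψ := by
  simp [intS, Finset.sum_sub_distrib]; ring

lemma intS_congr (a b : ℤ) (φ ψ : ℤ → ℂ) (h : ∀ j, φ j = ψ j) :
    intS a b φ = intS a b ψ := by
  have : φ = ψ := funext h
  rw [this]

/-- The 2-cocycle `Ψ` on generators: `Ψ(t^m f(D), t^n g(D)) =
δ_{m+n,0} ∑_{i=1}^{m} f(-i) g(m-i)` for `m > 0`, extended antisymmetrically,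
and `Ψ = 0` when `m + n ≠ 0` or `m = 0`. -/
noncomputable def Psi (m : ℤ) (f : Polynomial ℂ) (n : ℤ) (g : Polynomial ℂ) : ℂ :=
  if m + n = 0 then
    if 0 < m then
      ∑ i ∈ Finset.range m.toNat, f.eval (-(i : ℂ) - 1) * g.eval ((m : ℂ) - (i : ℂ) - 1)
    else if 0 < n then
      -∑ i ∈ Finset.range n.toNat, g.eval (-(i : ℂ) - 1) * f.eval ((n : ℂ) - (i : ℂ) - 1)
    else 0
  else 0

/-- An element of the Lie algebra `𝒟` of formal differential operators, written
as a finite sum `∑_m t^m f_m(D)`, is a finitely supported function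
`ℤ →₀ Polynomial ℂ`.  The Lie bracket is determined by
`[t^m f(D), t^n g(D)] = t^{m+n}(f(D+n)g(D) - g(D+m)f(D))`. -/
noncomputable def diffBracket (a b : ℤ →₀ Polynomial ℂ) : ℤ →₀ Polynomial ℂ :=
  a.sum fun m f => b.sum fun n g =>
    Finsupp.single (m + n)
      (f.comp (X + C ((n : ℤ) : ℂ)) * g - g.comp (X + C ((m : ℤ) : ℂ)) * f)

/-- The bilinear extension of `Ψ` to `𝒟 × 𝒟`. -/
noncomputable def PsiHat (a b : ℤ →₀ Polynomial ℂ) : ℂ :=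
  a.sum fun m f => b.sum fun n g => Psi m f n g

lemma sum_range_int (N : ℕ) (φ : ℤ → ℂ) :
    ∑ j ∈ Finset.Ico (0:ℤ) (N:ℤ), φ j = ∑ i ∈ Finset.range N, φ (i:ℤ) := by
  induction N with
  | zero => simp
  | succ k ih =>
    have hb : ((k+1 : ℕ) : ℤ) = (k:ℤ) + 1 := by push_cast; ring
    have hsingle : Finset.Ico ((k:ℤ)) ((k:ℤ)+1) = {(k:ℤ)} := by
      ext x; simp [Finset.mem_Ico]; omega
    rw [Finset.sum_range_succ, ← ih, hb,
      ← sum_Ico_cat φ (by positivity) (by omega : (k:ℤ) ≤ (k:ℤ)+1), hsingle,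
      Finset.sum_singleton]

lemma sum_Ico_toNat (m : ℤ) (hm : 0 ≤ m) (φ : ℤ → ℂ) :
    ∑ j ∈ Finset.Ico (0:ℤ) m, φ j = ∑ i ∈ Finset.range m.toNat, φ (i:ℤ) := by
  have := sum_range_int m.toNat φ
  rwa [Int.toNat_of_nonneg hm] at this

lemma Psi_eq (m n : ℤ) (f g : Polynomial ℂ) :
    Psi m f n g = if m + n = 0 then
      intS 0 m (fun j => f.eval ((j:ℂ) - (m:ℂ)) * g.eval (j:ℂ)) else 0 := by
  unfold Psi
  by_cases h : m + n = 0
  · simp only [h, if_pos]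
    by_cases hm : 0 < m
    · rw [if_pos hm, intS_of_le hm.le]
      calc ∑ i ∈ Finset.range m.toNat, f.eval (-(i : ℂ) - 1) * g.eval ((m : ℂ) - (i : ℂ) - 1)
          = ∑ i ∈ Finset.range m.toNat,
              (fun j : ℤ => f.eval (-(j:ℂ) - 1) * g.eval ((m:ℂ) - (j:ℂ) - 1)) (i:ℤ) := by
            apply Finset.sum_congr rfl; intro i _; push_cast; ring_nf
        _ = ∑ j ∈ Finset.Ico (0:ℤ) m, f.eval (-(j:ℂ) - 1) * g.eval ((m:ℂ) - (j:ℂ) - 1) :=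
            (sum_Ico_toNat m hm.le
              (fun j : ℤ => f.eval (-(j:ℂ) - 1) * g.eval ((m:ℂ) - (j:ℂ) - 1))).symm
        _ = ∑ j ∈ Finset.Ico (0:ℤ) m, f.eval ((j:ℂ) - (m:ℂ)) * g.eval (j:ℂ) := by
            apply Finset.sum_nbij' (fun j => m - 1 - j) (fun j => m - 1 - j)
            · intro a ha; simp only [Finset.mem_Ico] at *; omega
            · intro a ha; simp only [Finset.mem_Ico] at *; omega
            · intro a _; omega
            · intro a _; omega
            · intro a _; push_cast; ring_nf
    · rw [if_neg hm]
      by_cases hm0 : m = 0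
      · subst hm0
        have hn0 : n = 0 := by omega
        subst hn0
        simp [intS_self]
      · have hnpos : 0 < n := by omega
        rw [if_pos hnpos, intS_symm, intS_of_le (by omega : m ≤ 0)]
        rw [neg_inj]
        calc ∑ i ∈ Finset.range n.toNat, g.eval (-(i : ℂ) - 1) * f.eval ((n : ℂ) - (i : ℂ) - 1)
            = ∑ i ∈ Finset.range n.toNat,
                (fun j : ℤ => g.eval (-(j:ℂ) - 1) * f.eval ((n:ℂ) - (j:ℂ) - 1)) (i:ℤ) := by
              apply Finset.sum_congr rfl; intro i _; push_cast; ring_nf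
          _ = ∑ j ∈ Finset.Ico (0:ℤ) n, g.eval (-(j:ℂ) - 1) * f.eval ((n:ℂ) - (j:ℂ) - 1) :=
              (sum_Ico_toNat n hnpos.le
                (fun j : ℤ => g.eval (-(j:ℂ) - 1) * f.eval ((n:ℂ) - (j:ℂ) - 1))).symm
          _ = ∑ j ∈ Finset.Ico m 0, f.eval ((j:ℂ) - (m:ℂ)) * g.eval (j:ℂ) := by
              apply Finset.sum_nbij' (fun j => -j - 1) (fun j => -j - 1)
              · intro a ha; simp only [Finset.mem_Ico] at *; omega
              · intro a ha; simp only [Finset.mem_Ico] at *; omega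
              · intro a _; omega
              · intro a _; omega
              · intro a ha
                simp only [Finset.mem_Ico] at ha
                have hmn : (m:ℂ) = -(n:ℂ) := by
                  have : m = -n := by omega
                  rw [this]; push_cast; ring
                rw [hmn]; push_cast; ring_nf
  · simp [h]

lemma Psi_antisymm (m n : ℤ) (f g : Polynomial ℂ) : Psi m f n g = - Psi n g m f := by
  rw [Psi_eq, Psi_eq]
  by_cases h : m + n = 0
  · rw [if_pos h, if_pos (by omega : n + m = 0)]
    have hn : n = -m := by omega
    subst hn
    rw [intS_symm 0 (-m), neg_neg]
    have hs := intS_shift 0 m (-m) (fun j => g.eval ((j:ℂ) - ((-m : ℤ):ℂ)) * f.eval (j:ℂ))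
    simp only [zero_add, add_neg_cancel] at hs
    rw [hs]
    apply intS_congr
    intro j
    push_cast
    ring_nf
  · rw [if_neg h, if_neg (by omega : ¬ n + m = 0), neg_zero]

lemma Psi_zero_left (m n : ℤ) (g : Polynomial ℂ) : Psi m 0 n g = 0 := by
  simp [Psi]

lemma Psi_add_left (m n : ℤ) (f₁ f₂ g : Polynomial ℂ) :
    Psi m (f₁ + f₂) n g = Psi m f₁ n g + Psi m f₂ n g := by
  unfold Psi
  split_ifs <;>
    simp [eval_add, add_mul, mul_add, Finset.sum_add_distrib] <;> ring

lemma gen_cocycle (m n p : ℤ) (f g h : Polynomial ℂ) :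
    Psi (m + n) (f.comp (X + C ((n : ℤ) : ℂ)) * g - g.comp (X + C ((m : ℤ) : ℂ)) * f) p h
      + Psi (n + p) (g.comp (X + C ((p : ℤ) : ℂ)) * h - h.comp (X + C ((n : ℤ) : ℂ)) * g) m f
      + Psi (p + m) (h.comp (X + C ((m : ℤ) : ℂ)) * f - f.comp (X + C ((p : ℤ) : ℂ)) * h) n g
      = 0 := by
  rw [Psi_eq, Psi_eq, Psi_eq]
  by_cases hs : m + n + p = 0
  · rw [if_pos (by omega : (m + n) + p = 0), if_pos (by omega : (n + p) + m = 0),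
      if_pos (by omega : (p + m) + n = 0)]
    have hpC : (p : ℂ) = -(m : ℂ) - (n : ℂ) := by
      have : p = -m - n := by omega
      rw [this]; push_cast; ring
    set F : ℤ → ℂ := fun j => f.eval ((j:ℂ) - (m:ℂ)) * (g.eval ((j:ℂ) + (p:ℂ)) * h.eval (j:ℂ)) with hF
    set F' : ℤ → ℂ := fun j => g.eval ((j:ℂ) - (n:ℂ)) * (f.eval ((j:ℂ) + (p:ℂ)) * h.eval (j:ℂ)) with hF'
    -- Term 1
    have e1 : intS 0 (m + n)
        (fun j => (f.comp (X + C ((n : ℤ) : ℂ)) * g - g.comp (X + C ((m : ℤ) : ℂ)) * f).eval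
          ((j:ℂ) - ((m + n : ℤ):ℂ)) * h.eval (j:ℂ))
        = intS 0 (m + n) F - intS 0 (m + n) F' := by
      rw [← intS_sub]
      apply intS_congr
      intro j
      simp only [eval_sub, eval_mul, eval_comp, eval_add, eval_X, eval_C, hF, hF']
      push_cast
      rw [hpC]
      ring_nf
    -- Term 2
    have sh1 : intS m 0 F = intS 0 (n + p) (fun j => F (j + m)) := by
      have h' := intS_shift 0 (n + p) m F
      simp only [zero_add] at h'
      rwa [(show n + p + m = 0 by omega)] at h'
    have sh2 : intS (-p) n F' = intS 0 (n + p) (fun j => F' (j + -p)) := by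
      have h' := intS_shift 0 (n + p) (-p) F'
      simp only [zero_add] at h'
      rwa [(show n + p + -p = n by omega)] at h'
    have e2 : intS 0 (n + p)
        (fun j => (g.comp (X + C ((p : ℤ) : ℂ)) * h - h.comp (X + C ((n : ℤ) : ℂ)) * g).eval
          ((j:ℂ) - ((n + p : ℤ):ℂ)) * f.eval (j:ℂ))
        = intS m 0 F - intS (-p) n F' := by
      rw [sh1, sh2, ← intS_sub]
      apply intS_congr
      intro j
      simp only [eval_sub, eval_mul, eval_comp, eval_add, eval_X, eval_C, hF, hF']
      push_cast
      rw [hpC]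
      ring_nf
    -- Term 3
    have sh3 : intS (-p) m F = intS 0 (p + m) (fun j => F (j + -p)) := by
      have h' := intS_shift 0 (p + m) (-p) F
      simp only [zero_add] at h'
      rwa [(show p + m + -p = m by omega)] at h'
    have sh4 : intS n 0 F' = intS 0 (p + m) (fun j => F' (j + n)) := by
      have h' := intS_shift 0 (p + m) n F'
      simp only [zero_add] at h'
      rwa [(show p + m + n = 0 by omega)] at h'
    have e3 : intS 0 (p + m)
        (fun j => (h.comp (X + C ((m : ℤ) : ℂ)) * f - f.comp (X + C ((p : ℤ) : ℂ)) * h).eval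
          ((j:ℂ) - ((p + m : ℤ):ℂ)) * g.eval (j:ℂ))
        = intS (-p) m F - intS n 0 F' := by
      rw [sh3, sh4, ← intS_sub]
      apply intS_congr
      intro j
      simp only [eval_sub, eval_mul, eval_comp, eval_add, eval_X, eval_C, hF, hF']
      push_cast
      rw [hpC]
      ring_nf
    rw [e1, e2, e3]
    have zF : intS 0 (m + n) F + intS m 0 F + intS (-p) m F = 0 := by
      have a1 := intS_add_intS 0 (m + n) (-p+p) F
      have a2 := intS_add_intS 0 (-p) m F
      have a3 := intS_add_intS 0 m 0 F
      have a4 := intS_self 0 F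
      rw [(show m + n = -p by omega)] at *
      linear_combination a2 + a3 + a4
    have zF' : intS 0 (m + n) F' + intS (-p) n F' + intS n 0 F' = 0 := by
      have a2 := intS_add_intS 0 (-p) n F'
      have a3 := intS_add_intS 0 n 0 F'
      have a4 := intS_self 0 F'
      rw [(show m + n = -p by omega)]
      linear_combination a2 + a3 + a4
    linear_combination zF - zF'
  · rw [if_neg (by omega : ¬ (m + n) + p = 0), if_neg (by omega : ¬ (n + p) + m = 0),
      if_neg (by omega : ¬ (p + m) + n = 0)]
    ring

lemma PsiHat_add_left (x y c : ℤ →₀ Polynomial ℂ) :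
    PsiHat (x + y) c = PsiHat x c + PsiHat y c := by
  unfold PsiHat
  apply Finsupp.sum_add_index'
  · intro m; simp [Psi_zero_left, Finsupp.sum]
  · intro m f₁ f₂
    simp [Finsupp.sum, Psi_add_left, Finset.sum_add_distrib]

noncomputable def PsiHatHom (c : ℤ →₀ Polynomial ℂ) : (ℤ →₀ Polynomial ℂ) →+ ℂ :=
  AddMonoidHom.mk' (fun x => PsiHat x c) (fun x y => PsiHat_add_left x y c)

lemma PsiHat_single_left (M : ℤ) (P : Polynomial ℂ) (c : ℤ →₀ Polynomial ℂ) :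
    PsiHat (Finsupp.single M P) c = c.sum fun p h => Psi M P p h := by
  unfold PsiHat
  apply Finsupp.sum_single_index
  simp [Psi_zero_left, Finsupp.sum]

lemma PsiHat_bracket (a b c : ℤ →₀ Polynomial ℂ) :
    PsiHat (diffBracket a b) c
      = a.sum fun m f => b.sum fun n g => c.sum fun p h =>
          Psi (m + n) (f.comp (X + C ((n : ℤ) : ℂ)) * g
            - g.comp (X + C ((m : ℤ) : ℂ)) * f) p h := by
  have : PsiHat (diffBracket a b) c = PsiHatHom c (diffBracket a b) := rfl
  rw [this, diffBracket, map_finsuppSum]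
  apply Finsupp.sum_congr
  intro m _
  rw [map_finsuppSum]
  apply Finsupp.sum_congr
  intro n _
  exact PsiHat_single_left _ _ _

lemma sum3_rot {α β γ : Type*} (s : Finset α) (t : Finset β) (u : Finset γ)
    (F : α → β → γ → ℂ) :
    ∑ x ∈ s, ∑ y ∈ t, ∑ z ∈ u, F x y z = ∑ y ∈ t, ∑ z ∈ u, ∑ x ∈ s, F x y z := by
  rw [Finset.sum_comm]
  apply Finset.sum_congr rfl
  intros
  rw [Finset.sum_comm]

/-- `Ψ` is a 2-cocycle on the Lie algebra of formal differential operators: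
it is antisymmetric and satisfies
`Ψ([a,b],c) + Ψ([b,c],a) + Ψ([c,a],b) = 0` for all `a, b, c` in the span
of the `t^m f(D)`. -/
theorem Psi_is_two_cocycle :
    (∀ a b : ℤ →₀ Polynomial ℂ, PsiHat a b = -PsiHat b a) ∧
    ∀ a b c : ℤ →₀ Polynomial ℂ,
      PsiHat (diffBracket a b) c + PsiHat (diffBracket b c) a
        + PsiHat (diffBracket c a) b = 0 := by
  constructor
  · intro a b
    simp only [PsiHat, Finsupp.sum, ← Finset.sum_neg_distrib]
    rw [Finset.sum_comm]
    exact Finset.sum_congr rfl fun n _ => Finset.sum_congr rfl fun m _ =>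
      Psi_antisymm m n (a m) (b n)
  · intro a b c
    rw [PsiHat_bracket a b c, PsiHat_bracket b c a, PsiHat_bracket c a b]
    simp only [Finsupp.sum]
    rw [← sum3_rot a.support b.support c.support
      (fun m n p => Psi (n + p) ((b n).comp (X + C ((p : ℤ) : ℂ)) * (c p)
        - (c p).comp (X + C ((n : ℤ) : ℂ)) * (b n)) m (a m))]
    rw [sum3_rot c.support a.support b.support
      (fun p m n => Psi (p + m) ((c p).comp (X + C ((m : ℤ) : ℂ)) * (a m)
        - (a m).comp (X + C ((p : ℤ) : ℂ)) * (c p)) n (b n))]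
    simp only [← Finset.sum_add_distrib]
    apply Finset.sum_eq_zero
    intro m _
    apply Finset.sum_eq_zero
    intro n _
    apply Finset.sum_eq_zero
    intro p _
    exact gen_cocycle m n p (a m) (b n) (c p)
end

section
/- Let h(n), n ∈ ℤ, be operators on S = ℂ[h(-1), h(-2), …] where h(n) for n < 0 acts by multiplication, h(n) for n > 0 acts as n ∂/∂h(-n), h(0) acts as 0, and define L(n) = (1/2) ∑_{j∈ℤ} :h(j)h(n-j): (normal ordering puts positive modes to the right; each application to a polynomial has finitely many nonzero terms). Then the L(n) satisfy the Virasoro relations with central charge 1: [L(m), L(n)] = (m-n) L(m+n) + (1/12)(m³ - m) δ_{m+n,0}·id. -/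
open MvPolynomial

/-- The Fock space `S = ℂ[h(-1), h(-2), …]`, realized as polynomials in
countably many variables, where the variable of index `i : ℕ` represents
`h(-(i+1))`. -/
abbrev FockSpace : Type := MvPolynomial ℕ ℂ

/-- The Heisenberg operators `h(n)` on `S`: for `n < 0`, multiplication by the
variable `h(n)`; for `n > 0`, the operator `n ∂/∂h(-n)`; and `h(0) = 0`.
These satisfy `[h(m), h(n)] = m δ_{m+n,0}` on `S`. -/
noncomputable def heisOp (n : ℤ) : Module.End ℂ FockSpace :=
  if n < 0 then LinearMap.mulLeft ℂ (X (-n - 1).toNat)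
  else if 0 < n then (n : ℂ) • (pderiv (n - 1).toNat).toLinearMap
  else 0

/-- The normal-ordered product `:h(j)h(k):`, which puts the positive modes
(annihilation operators) to the right, i.e. lets them act first. -/
noncomputable def normOrd (j k : ℤ) : Module.End ℂ FockSpace :=
  if j ≤ k then heisOp j * heisOp k else heisOp k * heisOp j

/-- `L(n) = (1/2) ∑_{j∈ℤ} :h(j)h(n-j):` — on each polynomial only finitely many
terms act nonzero, so the sum is a well-defined finite sum (`finsum`). -/
noncomputable def virOp (n : ℤ) : FockSpace → FockSpace :=
  fun p => (2 : ℂ)⁻¹ • ∑ᶠ j : ℤ, normOrd j (n - j) p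

/-! The modes satisfy the Heisenberg relations `[h(a), h(b)] = a δ_{a+b,0}`, and `:h(a)h(b):`
differs from `h(a)h(b)` by a scalar. Applied to a fixed polynomial, only the terms `j = -k` and
`j = k + n` of `[h(k), L(n)]` survive, so `[h(k), L(n)] = k h(k+n)`; by the Leibniz rule,
`[L(m), :h(j)h(n-j):] = -j h(j+m)h(n-j) - (n-j) h(j)h(n-j+m)`. Putting the right-hand side back
into normal order and summing over `j` (with `i = j + m` in the first sum) gives
`2(m-n) L(m+n)` plus the contractions, which occur only for `m + n = 0` and add up to
`∑_j j(j+m)([0 < j] - [-m < j]) = (m³-m)/6`. -/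

open Function Finset

-- `Module.End` carries no global Lie ring instance; the bracket is the ring commutator.
attribute [local instance] LieRing.ofAssociativeRing

theorem Ring.lie_mul {A : Type*} [Ring A] (a b c : A) : ⁅a, b * c⁆ = ⁅a, b⁆ * c + b * ⁅a, c⁆ := by
  simp only [Ring.lie_def]
  noncomm_ring

theorem MvPolynomial.pderiv_pderiv_comm {σ R : Type*} [CommSemiring R] (i j : σ)
    (p : MvPolynomial σ R) : pderiv i (pderiv j p) = pderiv j (pderiv i p) := by
  induction p using MvPolynomial.induction_on with
  | C a => simp
  | add p q hp hq => simp [hp, hq]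
  | mul_X p k ih =>
    classical
    simp only [pderiv_mul, map_add, ih, pderiv_X, Pi.single_apply]
    split_ifs <;> simp only [pderiv_one, map_zero, mul_zero, add_zero]
    abel

theorem heisOp_of_neg {n : ℤ} (hn : n < 0) :
    heisOp n = LinearMap.mulLeft ℂ (X (-n - 1).toNat) := by
  simp [heisOp, hn]

theorem heisOp_of_pos {n : ℤ} (hn : 0 < n) :
    heisOp n = (n : ℂ) • (pderiv (n - 1).toNat).toLinearMap := by
  simp [heisOp, hn, hn.not_gt]

theorem heisOp_zero : heisOp 0 = 0 := by
  simp [heisOp]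

theorem heisOp_lie_heisOp_of_neg_of_pos {a b : ℤ} (ha : a < 0) (hb : 0 < b) :
    ⁅heisOp a, heisOp b⁆ = (if a + b = 0 then (a : ℂ) else 0) • 1 := by
  refine LinearMap.ext fun p => ?_
  have hX : pderiv (b - 1).toNat (X (-a - 1).toNat : FockSpace) = if a + b = 0 then 1 else 0 := by
    classical
    simp only [pderiv_X, Pi.single_apply]
    exact if_congr (by omega) rfl rfl
  simp only [Ring.lie_def, heisOp_of_neg ha, heisOp_of_pos hb, LinearMap.sub_apply,
    Module.End.mul_apply, LinearMap.smul_apply, LinearMap.mulLeft_apply,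
    Derivation.coeFn_coe, pderiv_mul, hX, Module.End.one_apply, mul_smul_comm,
    ite_mul, one_mul, zero_mul]
  split_ifs
  · rw [show a = -b by omega]; push_cast; module
  · simp

theorem heisOp_lie_heisOp (a b : ℤ) :
    ⁅heisOp a, heisOp b⁆ = (if a + b = 0 then (a : ℂ) else 0) • 1 := by
  rcases eq_or_ne a 0 with rfl | ha₀
  · simp [heisOp_zero]
  rcases eq_or_ne b 0 with rfl | hb₀
  · simp [heisOp_zero, ha₀]
  rcases ha₀.lt_or_gt with ha | ha <;> rcases hb₀.lt_or_gt with hb | hb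
  · rw [if_neg (by omega)]
    refine LinearMap.ext fun p => ?_
    simp [Ring.lie_def, heisOp_of_neg ha, heisOp_of_neg hb, mul_left_comm]
  · exact heisOp_lie_heisOp_of_neg_of_pos ha hb
  · rw [← lie_skew, heisOp_lie_heisOp_of_neg_of_pos hb ha]
    split_ifs
    · rw [show a = -b by omega]; push_cast; module
    all_goals first | omega | simp
  · rw [if_neg (by omega)]
    refine LinearMap.ext fun p => ?_
    simp [Ring.lie_def, heisOp_of_pos ha, heisOp_of_pos hb, pderiv_pderiv_comm, smul_comm (a : ℂ)]

theorem heisOp_mul_heisOp (a b : ℤ) :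
    heisOp a * heisOp b = normOrd a b + (if a + b = 0 ∧ 0 < a then (a : ℂ) else 0) • 1 := by
  rw [normOrd]
  split_ifs with hab hc hc
  · omega
  · simp
  · rw [← sub_eq_iff_eq_add', ← Ring.lie_def, heisOp_lie_heisOp, if_pos hc.1]
  · rw [← sub_eq_iff_eq_add', ← Ring.lie_def, heisOp_lie_heisOp, if_neg (by omega)]

theorem lie_normOrd (T : Module.End ℂ FockSpace) (a b : ℤ) :
    ⁅T, normOrd a b⁆ = ⁅T, heisOp a * heisOp b⁆ := by
  have hT : ⁅T, (1 : Module.End ℂ FockSpace)⁆ = 0 := by simp [Ring.lie_def]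
  rw [heisOp_mul_heisOp, lie_add, lie_smul _ T (1 : Module.End ℂ FockSpace), hT, smul_zero,
    add_zero]

theorem exists_heisOp_apply_eq_zero (p : FockSpace) :
    ∃ B : ℕ, ∀ j : ℤ, B < j → heisOp j p = 0 := by
  refine ⟨p.vars.sup id + 1, fun j hj => ?_⟩
  rw [heisOp_of_pos (by omega), LinearMap.smul_apply, Derivation.coeFn_coe,
    pderiv_eq_zero_of_notMem_vars, smul_zero]
  intro hmem
  have := Finset.le_sup (f := id) hmem
  simp only [id] at this
  omega

theorem hasFiniteSupport_normOrd_apply (n : ℤ) (p : FockSpace) :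
    HasFiniteSupport fun j => normOrd j (n - j) p := by
  obtain ⟨B, hB⟩ := exists_heisOp_apply_eq_zero p
  refine (Set.finite_Icc (n - B - n.natAbs) (B + n.natAbs)).subset fun j hj => ?_
  contrapose! hj
  simp only [Set.mem_Icc, not_and_or, not_le] at hj
  rw [notMem_support]
  rcases hj with hj | hj
  · rw [normOrd, if_pos (by omega), Module.End.mul_apply, hB _ (by omega), map_zero]
  · rw [normOrd, if_neg (by omega), Module.End.mul_apply, hB _ (by omega), map_zero]

noncomputable def virOpₗ (n : ℤ) : Module.End ℂ FockSpace where
  toFun := virOp n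
  map_add' p q := by
    simp only [virOp, map_add, finsum_add_distrib (hasFiniteSupport_normOrd_apply n p)
      (hasFiniteSupport_normOrd_apply n q), smul_add]
  map_smul' c p := by
    simp only [virOp, map_smul, ← smul_finsum, RingHom.id_apply, smul_comm c]

@[simp]
theorem virOpₗ_apply (n : ℤ) (p : FockSpace) : virOpₗ n p = virOp n p := rfl

theorem lie_virOpₗ_apply (T : Module.End ℂ FockSpace) (n : ℤ) (p : FockSpace) :
    ⁅T, virOpₗ n⁆ p = (2 : ℂ)⁻¹ • ∑ᶠ j, ⁅T, normOrd j (n - j)⁆ p := by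
  have hT : HasFiniteSupport fun j => T (normOrd j (n - j) p) :=
    (hasFiniteSupport_normOrd_apply n p).fun_comp (map_zero T)
  rw [Ring.lie_def, LinearMap.sub_apply, Module.End.mul_apply, Module.End.mul_apply,
    virOpₗ_apply, virOpₗ_apply, virOp, virOp, map_smul,
    map_finsum T (hasFiniteSupport_normOrd_apply n p), ← smul_sub,
    ← finsum_sub_distrib hT (hasFiniteSupport_normOrd_apply n (T p))]
  rfl

theorem heisOp_lie_virOpₗ (k n : ℤ) : ⁅heisOp k, virOpₗ n⁆ = (k : ℂ) • heisOp (k + n) := by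
  refine LinearMap.ext fun p => ?_
  set x := (k : ℂ) • heisOp (k + n) p
  have hterm (j : ℤ) : ⁅heisOp k, normOrd j (n - j)⁆ p =
      (if j = -k then x else 0) + (if j = k + n then x else 0) := by
    rw [lie_normOrd, Ring.lie_mul, heisOp_lie_heisOp, heisOp_lie_heisOp]
    have h1 : k + j = 0 ↔ j = -k := by omega
    have h2 : k + (n - j) = 0 ↔ j = k + n := by omega
    simp only [h1, h2, x]
    have hnj : j = -k → n - j = k + n := by omega
    split_ifs with hj₁ hj₂ hj₂
    · simp [hnj hj₁, ← hj₂]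
    · simp [hnj hj₁]
    · simp [hj₂]
    · simp
  have hsupp : support (fun j => ⁅heisOp k, normOrd j (n - j)⁆ p) ⊆ ({-k, k + n} : Finset ℤ) := by
    intro j hj
    contrapose! hj
    simp only [coe_insert, coe_singleton, Set.mem_insert_iff, Set.mem_singleton_iff,
      not_or] at hj
    simp [hterm, hj.1, hj.2]
  rw [lie_virOpₗ_apply, finsum_eq_sum_of_support_subset _ hsupp]
  simp only [hterm, sum_add_distrib, sum_ite_eq', mem_insert, mem_singleton, true_or, or_true,
    if_true, LinearMap.smul_apply, x]
  module

theorem virOpₗ_lie_heisOp (m k : ℤ) : ⁅virOpₗ m, heisOp k⁆ = -((k : ℂ) • heisOp (k + m)) := by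
  rw [← heisOp_lie_virOpₗ, Ring.lie_def, Ring.lie_def, neg_sub]

theorem virOpₗ_lie_heisOp_mul_heisOp (m j k : ℤ) :
    ⁅virOpₗ m, heisOp j * heisOp k⁆
      = -((j : ℂ) • (heisOp (j + m) * heisOp k) + (k : ℂ) • (heisOp j * heisOp (k + m))) := by
  rw [Ring.lie_mul, virOpₗ_lie_heisOp, virOpₗ_lie_heisOp]
  refine LinearMap.ext fun p => ?_
  simp only [LinearMap.add_apply, LinearMap.neg_apply, Module.End.mul_apply, LinearMap.smul_apply,
    map_neg, map_smul]
  abel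

-- The contractions left over when `⁅L(m), :h(j)h(-m-j):⁆` is put back into normal order.
noncomputable def centralSummand (m j : ℤ) : ℂ :=
  ((if 0 < j then 1 else 0) - (if -m < j then 1 else 0)) * j * (j + m)

theorem virOpₗ_lie_normOrd (m n j : ℤ) :
    ⁅virOpₗ m, normOrd j (n - j)⁆
      = (-j : ℂ) • normOrd (j + m) (n - j) + ((j : ℂ) - n) • normOrd j (m + n - j)
        + (if m + n = 0 then centralSummand m j else 0) • 1 := by
  rw [lie_normOrd, virOpₗ_lie_heisOp_mul_heisOp, heisOp_mul_heisOp, heisOp_mul_heisOp,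
    show n - j + m = m + n - j by ring, show j + m + (n - j) = m + n by ring,
    show j + (m + n - j) = m + n by ring]
  by_cases h : m + n = 0
  · obtain rfl : n = -m := by omega
    simp only [h, true_and, if_true, centralSummand, show 0 < j + m ↔ -m < j by omega]
    split_ifs <;> push_cast <;> module
  · simp only [h, false_and, if_false]
    push_cast
    module

theorem centralSummand_neg (m j : ℤ) : centralSummand (-m) (j + m) = -centralSummand m j := by
  simp only [centralSummand, neg_neg, show 0 < j + m ↔ -m < j by omega,
    show m < j + m ↔ 0 < j by omega]
  push_cast
  ring

theorem hasFiniteSupport_centralSummand (m : ℤ) : HasFiniteSupport (centralSummand m) := by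
  refine (Set.finite_Icc (-m.natAbs : ℤ) m.natAbs).subset fun j hj => ?_
  contrapose! hj
  simp only [Set.mem_Icc, not_and_or, not_le] at hj
  rw [notMem_support, centralSummand, if_congr (show 0 < j ↔ -m < j by omega) rfl rfl, sub_self,
    zero_mul, zero_mul]

theorem sum_range_mul_sub (M : ℕ) : ∑ i ∈ range M, (i : ℂ) * (M - i) = ((M : ℂ) ^ 3 - M) / 6 := by
  have gauss (M : ℕ) : ∑ i ∈ range M, (i : ℂ) = M * (M - 1) / 2 := by
    induction M with
    | zero => simp
    | succ M ih => rw [sum_range_succ, ih]; push_cast; ring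
  induction M with
  | zero => simp
  | succ M ih =>
    have hsplit (i : ℕ) : (i : ℂ) * ((M + 1 : ℕ) - i) = i * (M - i) + i := by push_cast; ring
    rw [sum_congr rfl fun i _ => hsplit i, sum_add_distrib, sum_range_succ, ih, gauss]
    push_cast
    ring

theorem finsum_centralSummand_natCast (M : ℕ) :
    ∑ᶠ j, centralSummand M j = ((M : ℂ) ^ 3 - M) / 6 := by
  have hsupp : support (centralSummand M) ⊆ (range M).image (fun i : ℕ => -(i : ℤ)) := by
    intro j hj
    simp only [mem_support, centralSummand] at hj
    simp only [coe_image, coe_range, Set.mem_image, Set.mem_Iio]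
    split_ifs at hj <;> first | omega | exact ⟨(-j).toNat, by omega, by omega⟩ | simp at hj
  rw [finsum_eq_sum_of_support_subset _ hsupp, sum_image (by simp), ← sum_range_mul_sub]
  refine sum_congr rfl fun i hi => ?_
  simp only [mem_range] at hi
  simp only [centralSummand, if_neg (show ¬ 0 < -(i : ℤ) by omega),
    if_pos (show -(M : ℤ) < -i by omega)]
  push_cast
  ring

theorem finsum_centralSummand (m : ℤ) : ∑ᶠ j, centralSummand m j = ((m : ℂ) ^ 3 - m) / 6 := by
  obtain ⟨M, rfl | rfl⟩ := Int.eq_nat_or_neg m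
  · exact finsum_centralSummand_natCast M
  · rw [← finsum_comp_equiv (Equiv.addRight (M : ℤ))]
    simp only [Equiv.coe_addRight, centralSummand_neg, finsum_neg_distrib,
      finsum_centralSummand_natCast]
    push_cast
    ring

theorem finsum_virOpₗ_lie_normOrd_apply (m n : ℤ) (p : FockSpace) :
    ∑ᶠ j, ⁅virOpₗ m, normOrd j (n - j)⁆ p
      = ((m : ℂ) - n) • ∑ᶠ i, normOrd i (m + n - i) p
        + (if m + n = 0 then ((m : ℂ) ^ 3 - m) / 6 else 0) • p := by
  set N : ℤ → FockSpace := fun i => normOrd i (m + n - i) p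
  have hN : HasFiniteSupport N := hasFiniteSupport_normOrd_apply (m + n) p
  have hc : HasFiniteSupport fun j => if m + n = 0 then centralSummand m j else 0 := by
    split_ifs
    · exact hasFiniteSupport_centralSummand m
    · simp [HasFiniteSupport]
  have hcentral : ∑ᶠ j, (if m + n = 0 then centralSummand m j else 0)
      = if m + n = 0 then ((m : ℂ) ^ 3 - m) / 6 else 0 := by
    split_ifs <;> simp [finsum_centralSummand]
  have hshift : ∑ᶠ j : ℤ, (-j : ℂ) • N (j + m) = ∑ᶠ i : ℤ, ((m : ℂ) - i) • N i := by
    refine (finsum_congr fun j => ?_).trans (finsum_comp_equiv (Equiv.addRight m))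
    rw [Equiv.coe_addRight, Int.cast_add, sub_add_cancel_right]
  have h₁ : HasFiniteSupport fun j : ℤ => (-j : ℂ) • N (j + m) :=
    .fun_smul_right _ (hN.fun_comp_of_injective (add_left_injective m))
  have h₂ : HasFiniteSupport fun j : ℤ => ((j : ℂ) - n) • N j := .fun_smul_right _ hN
  have h₃ : HasFiniteSupport fun j : ℤ => (if m + n = 0 then centralSummand m j else 0) • p :=
    hc.fun_smul_left _
  have hre (j : ℤ) : normOrd (j + m) (n - j) p = N (j + m) := by
    simp only [N, show m + n - (j + m) = n - j by ring]
  simp only [virOpₗ_lie_normOrd, LinearMap.add_apply, LinearMap.smul_apply, Module.End.one_apply,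
    hre]
  rw [finsum_add_distrib (h₁.fun_add h₂) h₃, finsum_add_distrib h₁ h₂, hshift,
    ← finsum_add_distrib (.fun_smul_right _ hN) h₂, ← finsum_smul' hc, hcentral,
    smul_finsum' _ hN]
  congr 1
  refine finsum_congr fun i => ?_
  module

theorem virOpₗ_lie_virOpₗ (m n : ℤ) :
    ⁅virOpₗ m, virOpₗ n⁆ = ((m : ℂ) - n) • virOpₗ (m + n)
      + (if m + n = 0 then ((m : ℂ) ^ 3 - m) / 12 else 0) • 1 := by
  refine LinearMap.ext fun p => ?_
  rw [lie_virOpₗ_apply, finsum_virOpₗ_lie_normOrd_apply, LinearMap.add_apply,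
    LinearMap.smul_apply, LinearMap.smul_apply, virOpₗ_apply, virOp, Module.End.one_apply]
  split_ifs <;> module

/-- The operators `L(n) = (1/2) ∑_{j∈ℤ} :h(j)h(n-j):` on
`S = ℂ[h(-1), h(-2), …]` satisfy the Virasoro relations with central charge 1:
`[L(m), L(n)] = (m-n) L(m+n) + (1/12)(m³ - m) δ_{m+n,0} · id`. -/
theorem virasoro_commutator (m n : ℤ) (p : FockSpace) :
    virOp m (virOp n p) - virOp n (virOp m p)
      = ((m : ℂ) - (n : ℂ)) • virOp (m + n) p
        + (if m + n = 0 then (((m : ℂ) ^ 3 - (m : ℂ)) / 12) • p else 0) := by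
  have h := LinearMap.congr_fun (virOpₗ_lie_virOpₗ m n) p
  rw [Ring.lie_def] at h
  split_ifs at h ⊢ <;> simpa using h
end
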